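/- If two words w, w' over ℕ are Knuth equivalent, then their labeled versions φ_w(w) and φ_w(w') over Ñ are Knuth equivalent. -/

import Mathlib

open scoped BigOperators

/-! ## Words and Knuth relations -/

/-- Knuth relation (K): `u·bca·v ~ u·bac·v` with `a < b ≤ c`. -/
def KnuthK {α : Type*} [LinearOrder α] (w w' : List α) : Prop :=
  ∃ (u v : List α) (a b c : α), a < b ∧ b ≤ c ∧
    w = u ++ [b, c, a] ++ v ∧ w' = u ++ [b, a, c] ++ v

/-- Knuth relation (K'): `u·acb·v ~ u·cab·v` with `a ≤ b < c`. -/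
def KnuthK' {α : Type*} [LinearOrder α] (w w' : List α) : Prop :=
  ∃ (u v : List α) (a b c : α), a ≤ b ∧ b < c ∧
    w = u ++ [a, c, b] ++ v ∧ w' = u ++ [c, a, b] ++ v

/-- One step of a Knuth relation, in either direction. -/
def KnuthRel {α : Type*} [LinearOrder α] (w w' : List α) : Prop :=
  KnuthK w w' ∨ KnuthK w' w ∨ KnuthK' w w' ∨ KnuthK' w' w

/-- Knuth equivalence: the reflexive-transitive closure of the Knuth relations. -/
def KnuthEquiv {α : Type*} [LinearOrder α] : List α → List α → Prop :=
  Relation.ReflTransGen KnuthRel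

/-- The labeled alphabet Ñ = ℕ ×ₗ ℕ, ordered first by the letter, then by the label. -/
abbrev LblN := Lex (ℕ × ℕ)

instance : Inhabited LblN := ⟨toLex default⟩

/-- The labeling map φ_w : each occurrence of the integer `k` gets subscripts 1, 2, ...
from left to right. -/
def phiW (w : List ℕ) : List LblN :=
  (w.zipIdx.map Prod.swap).map fun p => toLex (p.2, (w.take p.1).count p.2 + 1)

/-- The label-forgetting map, sending `k_l` to `k`. -/
def forgetW (w : List LblN) : List ℕ := w.map fun x => (ofLex x).1

/-! ## Partitions, skew shapes, tableaux -/

/-- A partition, recorded as its sequence of (1-indexed) row lengths, with `p 0 = 0`. -/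
def IsPartition (p : ℕ → ℕ) : Prop :=
  p 0 = 0 ∧ (∀ i, 1 ≤ i → p (i + 1) ≤ p i) ∧ ∃ N, ∀ i, N ≤ i → p i = 0

/-- The empty partition. -/
def zeroPart : ℕ → ℕ := fun _ => 0

/-- The boxes of the skew diagram λ/μ (rows and columns indexed from 1). -/
def cells (lam mu : ℕ → ℕ) : Set (ℕ × ℕ) :=
  {c | 1 ≤ c.1 ∧ mu c.1 < c.2 ∧ c.2 ≤ lam c.1}

/-- The semistandardness condition for a filling of λ/μ: rows weakly increase and
columns strictly increase. -/
def IsSSYT {α : Type*} [Preorder α] (lam mu : ℕ → ℕ) (T : ℕ × ℕ → α) : Prop :=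
  (∀ i j, (i, j) ∈ cells lam mu → (i, j + 1) ∈ cells lam mu → T (i, j) ≤ T (i, j + 1)) ∧
  (∀ i j, (i, j) ∈ cells lam mu → (i + 1, j) ∈ cells lam mu → T (i, j) < T (i + 1, j))

/-- The conjugate partition: `conj p j = #{i ≥ 1 | p i ≥ j}`. -/
noncomputable def conj (p : ℕ → ℕ) (j : ℕ) : ℕ :=
  Set.ncard {i : ℕ | 1 ≤ i ∧ j ≤ p i}

/-- The number of (nonempty) rows of a shape. -/
noncomputable def numRows (lam : ℕ → ℕ) : ℕ :=
  sInf {N | ∀ i, N < i → lam i = 0}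

/-- The i-th row of a tableau, read left to right. -/
def rowOf {α : Type*} (lam mu : ℕ → ℕ) (T : ℕ × ℕ → α) (i : ℕ) : List α :=
  (List.range (lam i - mu i)).map fun k => T (i, mu i + k + 1)

/-- Rows `n, n-1, ..., 1` of a tableau, concatenated. -/
def rowWordUpTo {α : Type*} (lam mu : ℕ → ℕ) (T : ℕ × ℕ → α) : ℕ → List α
  | 0 => []
  | n + 1 => rowOf lam mu T (n + 1) ++ rowWordUpTo lam mu T n

/-- The row word of a tableau: rows read left to right, from the bottom row up. -/
noncomputable def rowWord {α : Type*} (lam mu : ℕ → ℕ) (T : ℕ × ℕ → α) : List α :=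
  rowWordUpTo lam mu T (numRows lam)

/-- The rectification of a word: the (shape, tableau) pair of a normal-shape
semistandard tableau whose row word is Knuth equivalent to the given word. -/
noncomputable def rectPair {α : Type*} [LinearOrder α] [Inhabited α] (w : List α) :
    (ℕ → ℕ) × (ℕ × ℕ → α) := by
  classical
  exact if h : ∃ p : (ℕ → ℕ) × (ℕ × ℕ → α),
      IsPartition p.1 ∧ IsSSYT p.1 zeroPart p.2 ∧ KnuthEquiv (rowWord p.1 zeroPart p.2) w
    then h.choose else (zeroPart, fun _ => default)

/-- The shape of the rectification of a word. -/
noncomputable def rectShape {α : Type*} [LinearOrder α] [Inhabited α] (w : List α) : ℕ → ℕ :=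
  (rectPair w).1

/-- The tableau of the rectification of a word. -/
noncomputable def rectTab {α : Type*} [LinearOrder α] [Inhabited α] (w : List α) :
    ℕ × ℕ → α :=
  (rectPair w).2

/-- The labeling map φ_T on tableaux: each occurrence of the integer `k` gets subscripts
1, 2, ... from the bottom row up, left to right within each row. -/
noncomputable def phiT (lam mu : ℕ → ℕ) (T : ℕ × ℕ → ℕ) : ℕ × ℕ → LblN :=
  fun c => toLex (T c,
    Set.ncard {d ∈ cells lam mu | T d = T c ∧ (c.1 < d.1 ∨ (d.1 = c.1 ∧ d.2 < c.2))} + 1)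

/-! ## Arms and body -/

/-- `∑_{i ≥ 2} (λ_i − μ_i)`. -/
noncomputable def tailSum (lam mu : ℕ → ℕ) : ℕ :=
  ∑ᶠ i : ℕ, if 2 ≤ i then lam i - mu i else 0

/-- `m = min{λ₂, Σ_{i≥2}(λᵢ − μᵢ)}`. -/
noncomputable def armM (lam mu : ℕ → ℕ) : ℕ := min (lam 2) (tailSum lam mu)

/-- `n = min{λ'₂, Σ_{j≥2}(λ'ⱼ − μ'ⱼ)}`. -/
noncomputable def armN (lam mu : ℕ → ℕ) : ℕ := min (conj lam 2) (tailSum (conj lam) (conj mu))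

/-- The right-arm of λ/μ: boxes `(1, m+μ₁), ..., (1, λ₁)`. -/
noncomputable def rightArm (lam mu : ℕ → ℕ) : Set (ℕ × ℕ) :=
  {c | c.1 = 1 ∧ armM lam mu + mu 1 ≤ c.2 ∧ c.2 ≤ lam 1}

/-- The left-arm of λ/μ: boxes `(n+μ'₁, 1), ..., (λ'₁, 1)`. -/
noncomputable def leftArm (lam mu : ℕ → ℕ) : Set (ℕ × ℕ) :=
  {c | c.2 = 1 ∧ armN lam mu + conj mu 1 ≤ c.1 ∧ c.1 ≤ conj lam 1}

/-- The body of λ/μ: the boxes that are in neither arm. -/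
noncomputable def body (lam mu : ℕ → ℕ) : Set (ℕ × ℕ) :=
  cells lam mu \ (rightArm lam mu ∪ leftArm lam mu)

/-! ## Semistandard tableaux over positive integers, Schur multiple zeta functions -/

/-- Semistandard Young tableaux of shape λ/μ with positive integer entries,
normalized to be `0` outside the diagram. -/
def SSYTset (lam mu : ℕ → ℕ) : Set (ℕ × ℕ → ℕ) :=
  {T | IsSSYT lam mu T ∧ (∀ c ∈ cells lam mu, 1 ≤ T c) ∧ ∀ c, c ∉ cells lam mu → T c = 0}

/-- The Schur multiple zeta function of shape λ/μ. -/
noncomputable def schurZeta (lam mu : ℕ → ℕ) (s : ℕ × ℕ → ℂ) : ℂ :=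
  ∑' M : SSYTset lam mu, ∏ᶠ c ∈ cells lam mu, ((M : ℕ × ℕ → ℕ) c : ℂ) ^ (-(s c))

/-- A corner of λ/μ. -/
def ShapeCorner (lam mu : ℕ → ℕ) (c : ℕ × ℕ) : Prop :=
  c ∈ cells lam mu ∧ (c.1 + 1, c.2) ∉ cells lam mu ∧ (c.1, c.2 + 1) ∉ cells lam mu

/-- The domain of absolute convergence `W_{λ/μ}`. -/
def InDomain (lam mu : ℕ → ℕ) (s : ℕ × ℕ → ℂ) : Prop :=
  ∀ c ∈ cells lam mu, 1 ≤ (s c).re ∧ (ShapeCorner lam mu c → 1 < (s c).re)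

/-! ## The shape μ * ν -/

/-- The outer shape ψ of μ * ν: `ψᵢ = μ₁ + νᵢ` for `i ≤ ℓ(ν)`, `ψᵢ = μ_{i−ℓ(ν)}` else. -/
noncomputable def starOuter (mu nu : ℕ → ℕ) : ℕ → ℕ := fun i =>
  if i = 0 then 0 else if i ≤ conj nu 1 then mu 1 + nu i else mu (i - conj nu 1)

/-- The inner (rectangle) shape of μ * ν : μ₁ columns and ν'₁ rows. -/
noncomputable def starInner (mu nu : ℕ → ℕ) : ℕ → ℕ := fun i =>
  if 1 ≤ i ∧ i ≤ conj nu 1 then mu 1 else 0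

/-- The filling `S * T` of μ * ν : `S` (shape μ) below, `T` (shape ν) to the right. -/
noncomputable def starTab {γ : Type*} (mu nu : ℕ → ℕ) (s t : ℕ × ℕ → γ) : ℕ × ℕ → γ :=
  fun c => if c.1 ≤ conj nu 1 then t (c.1, c.2 - mu 1) else s (c.1 - conj nu 1, c.2)

/-! ## Schur functions as formal power series, Littlewood–Richardson coefficients -/

/-- The (skew) Schur function `s_{λ/μ}` as a formal power series in variables
`x₀, x₁, x₂, ...` : the coefficient of a monomial `d` is the number of semistandard
tableaux of shape λ/μ and content `d`. -/
noncomputable def schurSeries (lam mu : ℕ → ℕ) : MvPowerSeries ℕ ℤ :=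
  fun d => (Set.ncard {T ∈ SSYTset lam mu |
    ∀ k : ℕ, d k = Set.ncard {c ∈ cells lam mu | T c = k}} : ℤ)

/-- The power series `Σ_λ c_λ · s_λ`, the sum ranging over all partitions λ. -/
noncomputable def seriesSum (cc : (ℕ → ℕ) → ℕ) : MvPowerSeries ℕ ℤ :=
  fun d => ∑ᶠ lam ∈ {p : ℕ → ℕ | IsPartition p}, (cc lam : ℤ) * schurSeries lam zeroPart d

/-! ## Jeu de taquin slides -/

/-- One elementary jeu de taquin slide on a configuration (hole, filled region, filling):
the smaller of the entries to the right of and below the hole moves into the hole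
(the one below moving in case of a tie), and the hole moves to the vacated box. -/
inductive JdtStep {α : Type*} [LinearOrder α] :
    ((ℕ × ℕ) × Set (ℕ × ℕ) × (ℕ × ℕ → α)) → ((ℕ × ℕ) × Set (ℕ × ℕ) × (ℕ × ℕ → α)) → Prop
  | right (h : ℕ × ℕ) (S : Set (ℕ × ℕ)) (T : ℕ × ℕ → α)
      (hr : (h.1, h.2 + 1) ∈ S)
      (hcmp : (h.1 + 1, h.2) ∈ S → T (h.1, h.2 + 1) < T (h.1 + 1, h.2)) :
      JdtStep (h, S, T)
        ((h.1, h.2 + 1), insert h (S \ {(h.1, h.2 + 1)}),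
          Function.update T h (T (h.1, h.2 + 1)))
  | down (h : ℕ × ℕ) (S : Set (ℕ × ℕ)) (T : ℕ × ℕ → α)
      (hd : (h.1 + 1, h.2) ∈ S)
      (hcmp : (h.1, h.2 + 1) ∈ S → T (h.1 + 1, h.2) ≤ T (h.1, h.2 + 1)) :
      JdtStep (h, S, T)
        ((h.1 + 1, h.2), insert h (S \ {(h.1 + 1, h.2)}),
          Function.update T h (T (h.1 + 1, h.2)))

/-- An inside corner of λ/μ: a corner `c` of the deleted diagram μ. -/
def InsideCorner (lam mu : ℕ → ℕ) (c : ℕ × ℕ) : Prop :=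
  1 ≤ c.1 ∧ 1 ≤ c.2 ∧ c.2 = mu c.1 ∧ mu (c.1 + 1) < c.2

/-- A full jeu de taquin slide from an inside corner, acting on (outer shape, inner
shape, filling) triples: the hole starts at an inside corner `c`, elementary slides are
repeated until the hole has no neighbor to its right or below, and then the hole
(at an outside corner `h`) is removed. -/
def SlideRel {α : Type*} [LinearOrder α] :
    ((ℕ → ℕ) × (ℕ → ℕ) × (ℕ × ℕ → α)) → ((ℕ → ℕ) × (ℕ → ℕ) × (ℕ × ℕ → α)) → Prop :=
  fun p q =>
    ∃ c h : ℕ × ℕ, InsideCorner p.1 p.2.1 c ∧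
      Relation.ReflTransGen JdtStep (c, cells p.1 p.2.1, p.2.2)
        (h, insert c (cells p.1 p.2.1) \ {h}, q.2.2) ∧
      (h.1, h.2 + 1) ∉ insert c (cells p.1 p.2.1) ∧
      (h.1 + 1, h.2) ∉ insert c (cells p.1 p.2.1) ∧
      h.2 = p.1 h.1 ∧
      q.1 = Function.update p.1 h.1 (h.2 - 1) ∧
      q.2.1 = Function.update p.2.1 c.1 (c.2 - 1)

/-!
The label of a letter only counts the equal letters to its left. A Knuth move rearranges three
adjacent letters but never exchanges two equal ones, so every label outside the window is kept
and the labels inside it are compared by their letters, except in the tie `b = c` of (K) or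
`a = b` of (K'), where the earlier occurrence carries the smaller label.
-/

section Labeling

variable {α : Type*} [LinearOrder α]

/-- The labeling φ, continued after the letters of `s` have been read. -/
def labelFrom (s : Multiset α) : List α → List (Lex (α × ℕ))
  | [] => []
  | a :: t => toLex (a, s.count a + 1) :: labelFrom (a ::ₘ s) t

theorem labelFrom_append (s : Multiset α) (x y : List α) :
    labelFrom s (x ++ y) = labelFrom s x ++ labelFrom (s + (x : Multiset α)) y := by
  induction x generalizing s with
  | nil => simp [labelFrom]
  | cons a t ih => simp [labelFrom, ih, ← Multiset.cons_coe, Multiset.add_cons]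

theorem length_labelFrom (s : Multiset α) (w : List α) : (labelFrom s w).length = w.length := by
  induction w generalizing s with
  | nil => rfl
  | cons a t ih => simp [labelFrom, ih]

theorem getElem_labelFrom (s : Multiset α) (w : List α) (i : ℕ) (hi : i < w.length) :
    (labelFrom s w)[i]'(by rwa [length_labelFrom]) =
      toLex (w[i], (s + (w.take i : Multiset α)).count w[i] + 1) := by
  induction w generalizing s i with
  | nil => simp at hi
  | cons a t ih =>
    cases i with
    | zero => simp [labelFrom]
    | succ i =>
      simp only [labelFrom, List.getElem_cons_succ]
      rw [ih _ i (by simpa using hi)]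
      simp [← Multiset.cons_coe, Multiset.add_cons]

theorem toLex_count_le {a b : α} {s t : Multiset α} (hab : a ≤ b) (hst : s ≤ t) :
    toLex (a, s.count a + 1) ≤ toLex (b, t.count b + 1) :=
  Prod.Lex.toLex_le_toLex'.2
    ⟨hab, fun (h : a = b) => by simpa [h] using Multiset.count_le_of_le b hst⟩

theorem knuthK_labelFrom (s : Multiset α) {w w' : List α} (h : KnuthK w w') :
    KnuthK (labelFrom s w) (labelFrom s w') := by
  obtain ⟨u, v, a, b, c, hab, hbc, rfl, rfl⟩ := h
  have hac : a ≠ c := (hab.trans_le hbc).ne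
  have hperm : ((u ++ [b, c, a] : List α) : Multiset α) = (u ++ [b, a, c] : List α) :=
    Multiset.coe_eq_coe.2 (.append_left u (.cons b (.swap a c [])))
  set X := s + (u : Multiset α)
  refine ⟨labelFrom s u, labelFrom (s + (u ++ [b, a, c] : List α)) v,
    toLex (a, (b ::ₘ X).count a + 1), toLex (b, X.count b + 1),
    toLex (c, (b ::ₘ X).count c + 1),
    Prod.Lex.toLex_lt_toLex.2 (.inl hab), toLex_count_le hbc (Multiset.le_cons_self X b),
    ?_, ?_⟩ <;>
  simp only [labelFrom_append, hperm] <;>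
  simp [labelFrom, Multiset.count_cons_of_ne hac, Multiset.count_cons_of_ne hac.symm, X]

theorem knuthK'_labelFrom (s : Multiset α) {w w' : List α} (h : KnuthK' w w') :
    KnuthK' (labelFrom s w) (labelFrom s w') := by
  obtain ⟨u, v, a, b, c, hab, hbc, rfl, rfl⟩ := h
  have hac : a ≠ c := (hab.trans_lt hbc).ne
  have hperm : ((u ++ [a, c, b] : List α) : Multiset α) = (u ++ [c, a, b] : List α) :=
    Multiset.coe_eq_coe.2 (.append_left u (.swap c a [b]))
  set X := s + (u : Multiset α)
  refine ⟨labelFrom s u, labelFrom (s + (u ++ [c, a, b] : List α)) v,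
    toLex (a, X.count a + 1), toLex (b, (a ::ₘ c ::ₘ X).count b + 1), toLex (c, X.count c + 1),
    toLex_count_le hab ((Multiset.le_cons_self X c).trans (Multiset.le_cons_self _ a)),
    Prod.Lex.toLex_lt_toLex.2 (.inl hbc), ?_, ?_⟩ <;>
  simp only [labelFrom_append, hperm] <;>
  simp [labelFrom, Multiset.count_cons_of_ne hac, Multiset.count_cons_of_ne hac.symm, X,
    Multiset.cons_swap a c]

theorem knuthRel_labelFrom (s : Multiset α) {w w' : List α} (h : KnuthRel w w') :
    KnuthRel (labelFrom s w) (labelFrom s w') :=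
  h.imp (knuthK_labelFrom s) <| .imp (knuthK_labelFrom s) <|
    .imp (knuthK'_labelFrom s) (knuthK'_labelFrom s)

theorem knuthEquiv_labelFrom (s : Multiset α) {w w' : List α} (h : KnuthEquiv w w') :
    KnuthEquiv (labelFrom s w) (labelFrom s w') :=
  Relation.ReflTransGen.lift (labelFrom s) (fun _ _ => knuthRel_labelFrom s) w w' h

end Labeling

theorem phiW_eq_labelFrom (w : List ℕ) : phiW w = labelFrom 0 w := by
  refine List.ext_getElem (by simp [phiW, length_labelFrom]) fun i hi _ => ?_
  rw [getElem_labelFrom 0 w i (by simpa [phiW] using hi)]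
  simp [phiW, List.getElem_zipIdx]

theorem knuthEquiv_phiW (w w' : List ℕ) (h : KnuthEquiv w w') :
    KnuthEquiv (phiW w) (phiW w') := by
  simpa only [phiW_eq_labelFrom] using knuthEquiv_labelFrom 0 h
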